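/- arXiv:2502.02625 — 4 statements merged into one kernel-verified Lean document; each statement's English description precedes it below -/
import Mathlib

section
/- Let V ≥ 1, γ > 0, σ₀ > 0, and define τ_w = (γ² + 2∑_{v=1}^{V} cos(vwπ/V))/(γ² + 2V) for integers w. Then τ_0 = 1, τ_w = (γ² − 2)/(γ² + 2V) for odd w with 1 ≤ w ≤ 2V−1, and τ_w = γ²/(γ² + 2V) for even w with 2 ≤ w ≤ 2V−2. Consequently the 2V × 2V Toeplitz kernel matrix K with entries K_{ij} = σ₀²τ_{|i−j|} satisfies K = (σ₀²/(γ²+2V))(2V·I + (γ²−1)𝟙𝟙ᵀ + ccᵀ), where 𝟙 is the all-ones vector and c = (1,−1,1,−1,…,1,−1)ᵀ. -/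
/-!
With `θ = wπ/V`, the sum `∑_{v=1}^{V} cos (vθ)` telescopes after multiplying by `2 sin (θ/2)`,
leaving `sin (wπ + θ/2) - sin (θ/2) = ((-1)^w - 1) sin (θ/2)`. For `0 < w < 2V` the factor
`sin (θ/2)` is nonzero, so the sum is `((-1)^w - 1)/2`, i.e. `-1` for odd and `0` for even `w`.
Hence off the diagonal `K_{ij}` only depends on the parity of `i - j`, which is that of `i + j`,
and `(-1)^(i+j) = c_i c_j`.
-/

open Real Finset Matrix

theorem two_mul_sin_half_mul_sum_cos (θ : ℝ) (n : ℕ) :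
    2 * sin (θ / 2) * ∑ k ∈ Icc 1 n, cos (k * θ) = sin ((n + 1 / 2) * θ) - sin (θ / 2) := by
  induction n with
  | zero => simp; ring_nf
  | succ n ih =>
    have hneg : θ / 2 - ((n + 1 : ℕ) : ℝ) * θ = -((n + 1 / 2) * θ) := by push_cast; ring
    rw [sum_Icc_succ_top (by omega), mul_add, ih, two_mul_sin_mul_cos, hneg, sin_neg]
    push_cast
    ring_nf

theorem sum_cos_nat_mul_pi_div {V w : ℕ} (hw₀ : 0 < w) (hw : w < 2 * V) :
    ∑ v ∈ Icc 1 V, cos (v * w * π / V) = ((-1) ^ w - 1) / 2 := by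
  have hV : (0 : ℝ) < V := by exact_mod_cast (by omega : 0 < V)
  set θ : ℝ := w * π / V
  have hsin : sin (θ / 2) ≠ 0 := by
    refine (sin_pos_of_pos_of_lt_pi (by positivity) ?_).ne'
    rw [div_div, div_lt_iff₀ (by positivity)]
    have : (w : ℝ) < 2 * V := by exact_mod_cast hw
    nlinarith [pi_pos]
  have hsum : ∑ v ∈ Icc 1 V, cos (v * w * π / V) = ∑ v ∈ Icc 1 V, cos (v * θ) :=
    sum_congr rfl fun v _ => by simp only [θ]; ring_nf
  have htop : ((V : ℝ) + 1 / 2) * θ = θ / 2 + w * π := by simp only [θ]; field_simp; ring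
  apply mul_left_cancel₀ (mul_ne_zero two_ne_zero hsin)
  rw [hsum, two_mul_sin_half_mul_sum_cos, htop, sin_add_nat_mul_pi]
  ring

theorem neg_one_pow_natAbs_sub {R : Type*} [Ring R] (i j : ℕ) :
    (-1 : R) ^ ((i : ℤ) - j).natAbs = (-1) ^ i * (-1) ^ j := by
  rw [← pow_add, neg_one_pow_eq_pow_mod_two, neg_one_pow_eq_pow_mod_two (i + j)]
  congr 1
  omega

theorem vqe_kernel_toeplitz_structure_general (V : ℕ) (γ σ₀ : ℝ)
    (hγ : 0 < γ)
    (τ : ℤ → ℝ)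
    (hτ : ∀ w : ℤ, τ w =
      (γ ^ 2 + 2 * ∑ v ∈ Finset.Icc 1 V, Real.cos ((v : ℝ) * (w : ℝ) * π / V))
        / (γ ^ 2 + 2 * V))
    (K : Matrix (Fin (2 * V)) (Fin (2 * V)) ℝ)
    (hK : ∀ i j : Fin (2 * V), K i j = σ₀ ^ 2 * τ (((i : ℤ) - (j : ℤ)).natAbs))
    (c : Fin (2 * V) → ℝ) (hc : ∀ i, c i = (-1 : ℝ) ^ (i : ℕ)) :
    τ 0 = 1 ∧
    (∀ w : ℤ, Odd w → 1 ≤ w → w ≤ 2 * (V : ℤ) - 1 → τ w = (γ ^ 2 - 2) / (γ ^ 2 + 2 * V)) ∧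
    (∀ w : ℤ, Even w → 2 ≤ w → w ≤ 2 * (V : ℤ) - 2 → τ w = γ ^ 2 / (γ ^ 2 + 2 * V)) ∧
    K = (σ₀ ^ 2 / (γ ^ 2 + 2 * V)) •
      ((2 * (V : ℝ)) • (1 : Matrix (Fin (2 * V)) (Fin (2 * V)) ℝ)
        + (γ ^ 2 - 1) • Matrix.vecMulVec (fun _ => (1 : ℝ)) (fun _ => (1 : ℝ))
        + Matrix.vecMulVec c c) := by
  have hden : γ ^ 2 + 2 * (V : ℝ) ≠ 0 := by positivity
  have hτ₀ : τ 0 = 1 := by simpa [hτ] using div_self hden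
  have hτ_pos : ∀ n : ℕ, 0 < n → n < 2 * V →
      τ n = (γ ^ 2 - 1 + (-1) ^ n) / (γ ^ 2 + 2 * V) := by
    intro n hn₀ hn
    rw [hτ, Int.cast_natCast, sum_cos_nat_mul_pi_div hn₀ hn]
    ring
  refine ⟨hτ₀, fun w hodd hw₁ hw₂ => ?_, fun w heven hw₁ hw₂ => ?_, ?_⟩
  · lift w to ℕ using (by omega)
    rw [hτ_pos w (by omega) (by omega), (Int.odd_coe_nat w).mp hodd |>.neg_one_pow]
    ring
  · lift w to ℕ using (by omega)
    rw [hτ_pos w (by omega) (by omega), (Int.even_coe_nat w).mp heven |>.neg_one_pow]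
    ring
  · ext i j
    simp only [hK, hc, Matrix.smul_apply, Matrix.add_apply, one_apply, vecMulVec_apply, smul_eq_mul,
      mul_one]
    rcases eq_or_ne i j with rfl | hij
    · rw [sub_self, Int.natAbs_zero, Nat.cast_zero, hτ₀, if_pos rfl, ← mul_pow,
        neg_one_mul, neg_neg, one_pow]
      field_simp
      ring
    · have hij' : (i : ℕ) ≠ j := Fin.val_ne_of_ne hij
      rw [if_neg hij, hτ_pos _ (by omega) (by omega), neg_one_pow_natAbs_sub]
      field_simp
      ring

theorem vqe_kernel_toeplitz_structure (V : ℕ) (hV : 1 ≤ V) (γ σ₀ : ℝ)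
    (hγ : 0 < γ) (hσ₀ : 0 < σ₀)
    (τ : ℤ → ℝ)
    (hτ : ∀ w : ℤ, τ w =
      (γ ^ 2 + 2 * ∑ v ∈ Finset.Icc 1 V, Real.cos ((v : ℝ) * (w : ℝ) * π / V))
        / (γ ^ 2 + 2 * V))
    (K : Matrix (Fin (2 * V)) (Fin (2 * V)) ℝ)
    (hK : ∀ i j : Fin (2 * V), K i j = σ₀ ^ 2 * τ (((i : ℤ) - (j : ℤ)).natAbs))
    (c : Fin (2 * V) → ℝ) (hc : ∀ i, c i = (-1 : ℝ) ^ (i : ℕ)) :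
    τ 0 = 1 ∧
    (∀ w : ℤ, Odd w → 1 ≤ w → w ≤ 2 * (V : ℤ) - 1 → τ w = (γ ^ 2 - 2) / (γ ^ 2 + 2 * V)) ∧
    (∀ w : ℤ, Even w → 2 ≤ w → w ≤ 2 * (V : ℤ) - 2 → τ w = γ ^ 2 / (γ ^ 2 + 2 * V)) ∧
    K = (σ₀ ^ 2 / (γ ^ 2 + 2 * V)) •
      ((2 * (V : ℝ)) • (1 : Matrix (Fin (2 * V)) (Fin (2 * V)) ℝ)
        + (γ ^ 2 - 1) • Matrix.vecMulVec (fun _ => (1 : ℝ)) (fun _ => (1 : ℝ))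
        + Matrix.vecMulVec c c) :=
  vqe_kernel_toeplitz_structure_general V γ σ₀ hγ τ hτ K hK c hc
end

section
/- Let V ≥ 1 and α' be real. Define κ_w = 2∑_{v=1}^{V} v·sin(v((2w+1)π/(2V) − α')) for w = 0,…,2V−1. Then ∑_{w=0}^{2V−1} κ_w² = 4V·(V(V+1)(2V+1)/6 + V²·cos(2Vα')). -/
open Real Finset

/-! With θ_w = (2w+1)π/(2V) − α', expanding the square reduces everything to the discrete
orthogonality of v ↦ sin(vθ_w) over the 2V equally spaced nodes θ_w. By product-to-sum,
∑_w sin(vθ_w) sin(uθ_w) is half the difference of the cosine sums ∑_w cos((v ∓ u)θ_w), and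
∑_w cos(kθ_w) is the real part of a geometric sum of 2V-th roots of unity, which vanishes
unless 2V ∣ k. For 1 ≤ u, v ≤ V only k = 0 and k = v + u = 2V survive; in the latter case every
node contributes −cos(2Vα'), which produces the cos(2Vα') term. -/

theorem sum_range_cos_add_mul_two_pi_int_div_eq_zero (N : ℕ) {k : ℤ} (hk : ¬ (N : ℤ) ∣ k)
    (φ : ℝ) : ∑ w ∈ range N, cos (φ + w * (2 * π * k / N)) = 0 := by
  rcases eq_or_ne N 0 with rfl | hN
  · simp
  have hξ := Complex.isPrimitiveRoot_exp N hN
  have hζN : (Complex.exp (2 * π * Complex.I / N) ^ k) ^ N = 1 := by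
    rw [← zpow_natCast, ← zpow_mul, mul_comm k, zpow_mul, zpow_natCast, hξ.pow_eq_one, one_zpow]
  have hζ : Complex.exp (2 * π * Complex.I / N) ^ k ≠ 1 :=
    fun h => hk ((hξ.zpow_eq_one_iff_dvd k).mp h)
  have hterm (w : ℕ) : Complex.exp (↑(φ + w * (2 * π * k / N)) * Complex.I)
      = Complex.exp (φ * Complex.I) * (Complex.exp (2 * π * Complex.I / N) ^ k) ^ w := by
    rw [← Complex.exp_int_mul, ← Complex.exp_nat_mul, ← Complex.exp_add]
    push_cast
    ring_nf
  calc ∑ w ∈ range N, cos (φ + w * (2 * π * k / N))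
      = (∑ w ∈ range N, Complex.exp (↑(φ + w * (2 * π * k / N)) * Complex.I)).re := by
        simp only [Complex.re_sum, Complex.exp_ofReal_mul_I_re]
    _ = 0 := by
        simp only [hterm, ← mul_sum, geom_sum_eq hζ, hζN, sub_self, zero_div, mul_zero,
          Complex.zero_re]

theorem sum_Icc_one_sq (n : ℕ) : ∑ v ∈ Icc 1 n, (v : ℝ) ^ 2 = n * (n + 1) * (2 * n + 1) / 6 := by
  induction n with
  | zero => simp
  | succ n ih =>
    rw [sum_Icc_succ_top (by omega), ih]
    push_cast
    ring

noncomputable def midpointAngle (V : ℕ) (α : ℝ) (w : ℕ) : ℝ := (2 * w + 1) * π / (2 * V) - α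

section midpointAngle

variable {V : ℕ} (α : ℝ)

theorem int_mul_midpointAngle (hV : V ≠ 0) (k : ℤ) (w : ℕ) :
    k * midpointAngle V α w = k * (π / (2 * V) - α) + w * (2 * π * k / (2 * V : ℕ)) := by
  unfold midpointAngle
  push_cast
  field_simp
  ring

theorem sum_cos_int_mul_midpointAngle_eq_zero {k : ℤ} (hk : ¬ ((2 * V : ℕ) : ℤ) ∣ k) :
    ∑ w ∈ range (2 * V), cos (k * midpointAngle V α w) = 0 := by
  rcases eq_or_ne V 0 with rfl | hV
  · simp
  simp only [int_mul_midpointAngle α hV]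
  exact sum_range_cos_add_mul_two_pi_int_div_eq_zero _ hk _

theorem sum_cos_two_mul_midpointAngle :
    ∑ w ∈ range (2 * V), cos (2 * V * midpointAngle V α w) = -(2 * V * cos (2 * V * α)) := by
  rcases eq_or_ne V 0 with rfl | hV
  · simp
  have hterm (w : ℕ) : cos (2 * V * midpointAngle V α w) = -cos (2 * V * α) := by
    have : 2 * V * midpointAngle V α w = π - 2 * V * α + w * (2 * π) := by
      unfold midpointAngle
      field_simp
      ring
    rw [this, cos_add_nat_mul_two_pi, cos_pi_sub]
  simp only [hterm, sum_const, card_range, nsmul_eq_mul]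
  push_cast
  ring

theorem sum_sin_mul_sin_midpointAngle {v u : ℕ} (hv : v ∈ Icc 1 V) (hu : u ∈ Icc 1 V) :
    ∑ w ∈ range (2 * V), sin (v * midpointAngle V α w) * sin (u * midpointAngle V α w) =
      if v = u then V * (1 + if v = V then cos (2 * V * α) else 0) else 0 := by
  rw [mem_Icc] at hv hu
  have hsplit (w : ℕ) : sin (v * midpointAngle V α w) * sin (u * midpointAngle V α w) =
      (cos (((v - u : ℤ) : ℝ) * midpointAngle V α w)
        - cos (((v + u : ℤ) : ℝ) * midpointAngle V α w)) / 2 := by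
    push_cast
    rw [sub_mul, add_mul, cos_sub, cos_add]
    ring
  have hndvd (k : ℤ) (hk0 : k ≠ 0) (hlo : -(2 * V : ℤ) < k) (hhi : k < 2 * V) :
      ¬ ((2 * V : ℕ) : ℤ) ∣ k :=
    fun hd => hk0 (Int.eq_zero_of_abs_lt_dvd hd (by push_cast; exact abs_lt.mpr ⟨hlo, hhi⟩))
  simp only [hsplit, ← sum_div, sum_sub_distrib]
  by_cases hvu : v = u
  · subst hvu
    have hdiff : ∑ w ∈ range (2 * V), cos (((v - v : ℤ) : ℝ) * midpointAngle V α w) = 2 * V := by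
      simp
    by_cases hvV : v = V
    · subst hvV
      have hsum : ((v + v : ℤ) : ℝ) = 2 * v := by push_cast; ring
      rw [hdiff, hsum, sum_cos_two_mul_midpointAngle]
      simp only [if_true]
      ring
    · rw [hdiff, sum_cos_int_mul_midpointAngle_eq_zero α
        (hndvd _ (by omega) (by omega) (by omega))]
      simp [hvV]
  · rw [sum_cos_int_mul_midpointAngle_eq_zero α
        (hndvd _ (by omega) (by omega) (by omega)),
      sum_cos_int_mul_midpointAngle_eq_zero α
        (hndvd _ (by omega) (by omega) (by omega))]
    simp [hvu]

end midpointAngle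

theorem sum_sq_sum_eq_sum_sum_sum_mul {ι ι' R : Type*} [CommSemiring R] (s : Finset ι)
    (t : Finset ι') (f : ι' → ι → R) :
    ∑ w ∈ s, (∑ v ∈ t, f v w) ^ 2 = ∑ v ∈ t, ∑ u ∈ t, ∑ w ∈ s, f v w * f u w := by
  simp_rw [sq, sum_mul_sum]
  rw [sum_comm]
  exact sum_congr rfl fun v _ => sum_comm

theorem derivative_kernel_vector_norm_sq (V : ℕ) (hV : 1 ≤ V) (α' : ℝ)
    (κ : ℕ → ℝ)
    (hκ : ∀ w : ℕ, κ w =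
      2 * ∑ v ∈ Finset.Icc 1 V,
        (v : ℝ) * Real.sin ((v : ℝ) * ((2 * (w : ℝ) + 1) * π / (2 * V) - α'))) :
    ∑ w ∈ Finset.range (2 * V), (κ w) ^ 2 =
      4 * V * ((V : ℝ) * (V + 1) * (2 * V + 1) / 6 + (V : ℝ) ^ 2 * Real.cos (2 * V * α')) := by
  have hcross {v u : ℕ} (hv : v ∈ Icc 1 V) (hu : u ∈ Icc 1 V) :
      ∑ w ∈ range (2 * V), v * sin (v * midpointAngle V α' w) * (u * sin (u * midpointAngle V α' w))
        = if v = u then (v : ℝ) ^ 2 * V * (1 + if v = V then cos (2 * V * α') else 0) else 0 := by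
    simp_rw [mul_mul_mul_comm _ (sin _), ← mul_sum, sum_sin_mul_sin_midpointAngle α' hv hu]
    split_ifs <;> simp_all [sq, mul_assoc]
  calc ∑ w ∈ range (2 * V), κ w ^ 2
      = 4 * ∑ w ∈ range (2 * V), (∑ v ∈ Icc 1 V, v * sin (v * midpointAngle V α' w)) ^ 2 := by
        simp only [hκ, mul_pow, ← mul_sum, midpointAngle]
        norm_num
    _ = 4 * ∑ v ∈ Icc 1 V, (v : ℝ) ^ 2 * V * (1 + if v = V then cos (2 * V * α') else 0) := by
        rw [sum_sq_sum_eq_sum_sum_sum_mul]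
        congr 1
        refine sum_congr rfl fun v hv => ?_
        rw [sum_congr rfl fun u hu => hcross hv hu, sum_ite_eq, if_pos hv]
    _ = _ := by
        simp only [mul_add, mul_one, mul_ite, mul_zero, sum_add_distrib, sum_ite_eq',
          mem_Icc.mpr ⟨hV, le_rfl⟩, if_true, ← sum_mul, sum_Icc_one_sq]
        ring
end

section
/- For every natural number V ≥ 1 and real x such that sin(x/2) ≠ 0, the identity 2∑_{v=1}^{V} v·sin(v((2w+1)π/(2V) − α')) = (−1)^w·[cos(Vα')/(2 sin²((2w+1)π/(4V) − α'/2)) + V·sin((2w+1)π/(4V) − (V+1/2)α')/sin((2w+1)π/(4V) − α'/2)] holds for all integers w with 0 ≤ w ≤ 2V−1 and real α' with sin((2w+1)π/(4V) − α'/2) ≠ 0. -/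
/-!
After multiplication by `2 sin² (x / 2) = 1 - cos x`, the addition formulas give by induction
the closed form `((V + 1) sin (V x) - V sin ((V + 1) x)) / (2 sin² (x / 2))` of the derivative
Dirichlet kernel.
At `x = (2w + 1)π / (2V) - α'` both sines are `(-1)^w` times a cosine, and the difference of
those two cosines is `2 sin (x / 2) sin (x / 2 - V α')`.
-/

open Real Finset

theorem two_mul_sin_sq_half_mul_sum_Icc_mul_sin_mul (V : ℕ) (x : ℝ) :
    2 * sin (x / 2) ^ 2 * (2 * ∑ v ∈ Icc 1 V, (v : ℝ) * sin (v * x)) =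
      (V + 1) * sin (V * x) - V * sin ((V + 1) * x) := by
  have hcos : 2 * sin (x / 2) ^ 2 = 1 - cos x := by
    rw [show cos x = cos (2 * (x / 2)) by ring_nf, cos_two_mul_eq_one_sub]; ring
  induction V with
  | zero => simp
  | succ n ih =>
    rw [sum_Icc_succ_top (by omega), mul_add, mul_add, ih, hcos]
    push_cast
    have hsub : sin (n * x) = sin ((n + 1) * x) * cos x - cos ((n + 1) * x) * sin x := by
      rw [← sin_sub]; ring_nf
    have hadd : sin ((n + 1 + 1) * x) = sin ((n + 1) * x) * cos x + cos ((n + 1) * x) * sin x := by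
      rw [← sin_add]; ring_nf
    rw [hsub, hadd]
    ring

theorem two_mul_sum_Icc_mul_sin_mul {x : ℝ} (hx : sin (x / 2) ≠ 0) (V : ℕ) :
    2 * ∑ v ∈ Icc 1 V, (v : ℝ) * sin (v * x) =
      ((V + 1) * sin (V * x) - V * sin ((V + 1) * x)) / (2 * sin (x / 2) ^ 2) := by
  rw [← two_mul_sin_sq_half_mul_sum_Icc_mul_sin_mul, mul_div_cancel_left₀]
  positivity

theorem sin_odd_mul_pi_div_two_sub (w : ℕ) (y : ℝ) :
    sin ((2 * w + 1) * π / 2 - y) = (-1) ^ w * cos y := by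
  rw [show (2 * w + 1) * π / 2 - y = (π / 2 - y) + w * π by ring, sin_add_nat_mul_pi,
    sin_pi_div_two_sub]

theorem derivative_dirichlet_at_shifted_points_general (V : ℕ) (hV : 1 ≤ V) (w : ℕ)
    (α' : ℝ)
    (h : Real.sin ((2 * (w : ℝ) + 1) * π / (4 * V) - α' / 2) ≠ 0) :
    2 * ∑ v ∈ Finset.Icc 1 V,
        (v : ℝ) * Real.sin ((v : ℝ) * ((2 * (w : ℝ) + 1) * π / (2 * V) - α')) =
      (-1 : ℝ) ^ w *
        (Real.cos ((V : ℝ) * α') /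
            (2 * (Real.sin ((2 * (w : ℝ) + 1) * π / (4 * V) - α' / 2)) ^ 2)
         + (V : ℝ) * Real.sin ((2 * (w : ℝ) + 1) * π / (4 * V) - ((V : ℝ) + 1/2) * α') /
            Real.sin ((2 * (w : ℝ) + 1) * π / (4 * V) - α' / 2)) := by
  have hV0 : (V : ℝ) ≠ 0 := by positivity
  set x := (2 * (w : ℝ) + 1) * π / (2 * V) - α' with hx
  set θ := (2 * (w : ℝ) + 1) * π / (4 * V) - α' / 2
  have hθ : x / 2 = θ := by field_simp; ring
  have hVx : V * x = (2 * w + 1) * π / 2 - V * α' := by rw [hx]; field_simp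
  have hV1x : (V + 1) * x = (2 * w + 1) * π / 2 - (V * α' - x) := by rw [hx]; field_simp; ring
  have hψ : (2 * (w : ℝ) + 1) * π / (4 * V) - (V + 1 / 2) * α' = θ - V * α' := by ring
  have hcos : cos (V * α') - cos (V * α' - x) = 2 * sin θ * sin (θ - V * α') := by
    rw [cos_sub_cos, show (V * α' + (V * α' - x)) / 2 = -(x / 2 - V * α') by ring,
      show (V * α' - (V * α' - x)) / 2 = x / 2 by ring, sin_neg, hθ]
    ring
  rw [two_mul_sum_Icc_mul_sin_mul (hθ ▸ h), hVx, hV1x, sin_odd_mul_pi_div_two_sub,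
    sin_odd_mul_pi_div_two_sub, hθ, hψ]
  field_simp
  linear_combination (V : ℝ) * hcos

theorem derivative_dirichlet_at_shifted_points (V : ℕ) (hV : 1 ≤ V) (w : ℕ)
    (hw : w ≤ 2 * V - 1) (α' : ℝ)
    (h : Real.sin ((2 * (w : ℝ) + 1) * π / (4 * V) - α' / 2) ≠ 0) :
    2 * ∑ v ∈ Finset.Icc 1 V,
        (v : ℝ) * Real.sin ((v : ℝ) * ((2 * (w : ℝ) + 1) * π / (2 * V) - α')) =
      (-1 : ℝ) ^ w *
        (Real.cos ((V : ℝ) * α') /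
            (2 * (Real.sin ((2 * (w : ℝ) + 1) * π / (4 * V) - α' / 2)) ^ 2)
         + (V : ℝ) * Real.sin ((2 * (w : ℝ) + 1) * π / (4 * V) - ((V : ℝ) + 1/2) * α') /
            Real.sin ((2 * (w : ℝ) + 1) * π / (4 * V) - α' / 2)) :=
  derivative_dirichlet_at_shifted_points_general V hV w α' h
end

section
/- Gaussian process derivative prediction from two shifted observations (first-order Bayesian PSR, variance): Under the setup of the 2×2 kernel K = σ₀²·[[1, (γ²+2cos2α)/(γ²+2)], [(γ²+2cos2α)/(γ²+2), 1]], cross-covariance k' = (2σ₀² sinα/(γ²+2))·(−1, 1)ᵀ, and test-kernel value k'' = 2σ₀²/(γ²+2), the posterior variance k'' − k'ᵀ(K + σ²I)⁻¹ k' equals σ²/((γ²/2 + 1)σ²/σ₀² + 2 sin²α). -/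
open Real Matrix

/-!
`K + σ²I` has the form `!![a, b; b, a]`, for which `(-1, 1)` is an eigenvector with eigenvalue
`a - b = σ² + σ₀² (1 - cos 2α)·2/(γ² + 2) = σ² + 4σ₀² sin²α/(γ² + 2)`. Since `k'` is a multiple
`t • (-1, 1)` of it, the quadratic form is `2t²/(a - b)`, and the rest is algebra.
-/

theorem Matrix.inv_mulVec_eq_inv_smul_of_mulVec_eq_smul {n K : Type*} [Fintype n] [DecidableEq n]
    [Field K] {A : Matrix n n K} {v : n → K} {μ : K} (hA : IsUnit A.det)
    (hv : A *ᵥ v = μ • v) : A⁻¹ *ᵥ v = μ⁻¹ • v := by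
  have hinv : μ • (A⁻¹ *ᵥ v) = v := by
    rw [← mulVec_smul, ← hv, mulVec_mulVec, nonsing_inv_mul _ hA, one_mulVec]
  rcases eq_or_ne μ 0 with rfl | hμ
  · rw [zero_smul] at hinv
    simp [← hinv]
  · rw [← inv_smul_smul₀ hμ (A⁻¹ *ᵥ v), hinv]

theorem Matrix.fin_two_symm_mulVec_neg_one_one {R : Type*} [CommRing R] (a b : R) :
    !![a, b; b, a] *ᵥ ![-1, 1] = (a - b) • ![-1, 1] := by
  ext i; fin_cases i <;> simp [mulVec, dotProduct] <;> ring

theorem Matrix.det_fin_two_symm {R : Type*} [CommRing R] (a b : R) :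
    !![a, b; b, a].det = (a - b) * (a + b) := by
  rw [det_fin_two_of]; ring

theorem one_sub_add_two_cos_two_mul_div (γ α : ℝ) :
    1 - (γ ^ 2 + 2 * cos (2 * α)) / (γ ^ 2 + 2) = 4 * sin α ^ 2 / (γ ^ 2 + 2) := by
  rw [cos_two_mul_eq_one_sub]; field_simp; ring

theorem one_add_add_two_cos_two_mul_div (γ α : ℝ) :
    1 + (γ ^ 2 + 2 * cos (2 * α)) / (γ ^ 2 + 2) = 2 * (γ ^ 2 + 2 * cos α ^ 2) / (γ ^ 2 + 2) := by
  rw [cos_two_mul]; field_simp; ring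

theorem bayesian_psr_variance_general (γ σ₀ σ α : ℝ) (hσ₀ : 0 < σ₀) (hσ : 0 < σ)
    (K : Matrix (Fin 2) (Fin 2) ℝ)
    (hK : K = σ₀ ^ 2 • !![1, (γ ^ 2 + 2 * Real.cos (2 * α)) / (γ ^ 2 + 2);
                         (γ ^ 2 + 2 * Real.cos (2 * α)) / (γ ^ 2 + 2), 1])
    (k' : Fin 2 → ℝ)
    (hk' : k' = fun i => (2 * σ₀ ^ 2 * Real.sin α / (γ ^ 2 + 2)) * ![(-1 : ℝ), 1] i)
    (k'' : ℝ) (hk'' : k'' = 2 * σ₀ ^ 2 / (γ ^ 2 + 2)) :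
    k'' - k' ⬝ᵥ ((K + σ ^ 2 • (1 : Matrix (Fin 2) (Fin 2) ℝ))⁻¹ *ᵥ k') =
      σ ^ 2 / ((γ ^ 2 / 2 + 1) * σ ^ 2 / σ₀ ^ 2 + 2 * (Real.sin α) ^ 2) := by
  set ρ := (γ ^ 2 + 2 * cos (2 * α)) / (γ ^ 2 + 2)
  set a := σ₀ ^ 2 + σ ^ 2
  set b := σ₀ ^ 2 * ρ
  have hM : K + σ ^ 2 • (1 : Matrix (Fin 2) (Fin 2) ℝ) = !![a, b; b, a] := by
    rw [hK, one_fin_two]; ext i j; fin_cases i <;> fin_cases j <;> simp [a, b]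
  have hsub : a - b = σ ^ 2 + σ₀ ^ 2 * (4 * sin α ^ 2 / (γ ^ 2 + 2)) := by
    rw [← one_sub_add_two_cos_two_mul_div]; ring
  have hadd : a + b = σ ^ 2 + σ₀ ^ 2 * (2 * (γ ^ 2 + 2 * cos α ^ 2) / (γ ^ 2 + 2)) := by
    rw [← one_add_add_two_cos_two_mul_div]; ring
  have hdet : IsUnit !![a, b; b, a].det := by
    rw [det_fin_two_symm, hsub, hadd]; exact (by positivity : (0:ℝ) < _).ne'.isUnit
  have hu : ![-1, 1] ⬝ᵥ ![-1, 1] = (2 : ℝ) := by norm_num [dotProduct]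
  have hk's : k' = (2 * σ₀ ^ 2 * sin α / (γ ^ 2 + 2)) • ![-1, 1] := hk'
  rw [hM, hk's, mulVec_smul, inv_mulVec_eq_inv_smul_of_mulVec_eq_smul hdet
    (fin_two_symm_mulVec_neg_one_one a b), hsub, hk'']
  simp only [dotProduct_smul, smul_dotProduct, hu, smul_eq_mul]
  field_simp
  ring

theorem bayesian_psr_variance (γ σ₀ σ α : ℝ) (hγ : 0 < γ) (hσ₀ : 0 < σ₀) (hσ : 0 < σ)
    (K : Matrix (Fin 2) (Fin 2) ℝ)
    (hK : K = σ₀ ^ 2 • !![1, (γ ^ 2 + 2 * Real.cos (2 * α)) / (γ ^ 2 + 2);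
                         (γ ^ 2 + 2 * Real.cos (2 * α)) / (γ ^ 2 + 2), 1])
    (k' : Fin 2 → ℝ)
    (hk' : k' = fun i => (2 * σ₀ ^ 2 * Real.sin α / (γ ^ 2 + 2)) * ![(-1 : ℝ), 1] i)
    (k'' : ℝ) (hk'' : k'' = 2 * σ₀ ^ 2 / (γ ^ 2 + 2)) :
    k'' - k' ⬝ᵥ ((K + σ ^ 2 • (1 : Matrix (Fin 2) (Fin 2) ℝ))⁻¹ *ᵥ k') =
      σ ^ 2 / ((γ ^ 2 / 2 + 1) * σ ^ 2 / σ₀ ^ 2 + 2 * (Real.sin α) ^ 2) :=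
  bayesian_psr_variance_general γ σ₀ σ α hσ₀ hσ K hK k' hk' k'' hk''
end
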